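/- arXiv:1908.06172 — 4 statements merged into one kernel-verified Lean document; each statement's English description precedes it below -/
import Mathlib

section
/- (Composition law for K) For any Q₁, Q₂ in K, one has (Q₁ Q₂)(Q₁ Q₂)† = (Q₁ Q₁†)(Q₂ Q₂†), without any orthogonality assumption on the components. -/
/-!
Since `ε` is central with `ε² = 1`, the map `q_r + q_d ε ↦ (q_r + q_d, q_r - q_d)` is an injective
homomorphism of rings with involution from `K` into `ℍ × ℍ` with componentwise operations.
In `ℍ × ℍ` every `x x†` is a pair of real scalars, hence central, so
`(xy)(xy)† = x (y y†) x† = (x x†)(y y†)`.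
-/

noncomputable section

/-- The algebra `K = ℍ ⊕ ℍε` of "dual" quaternions with `ε` central, `ε² = 1`,
modeled on pairs `(q_r, q_d)`. -/
def Kmul (x y : Quaternion ℝ × Quaternion ℝ) : Quaternion ℝ × Quaternion ℝ :=
  (x.1 * y.1 + x.2 * y.2, x.1 * y.2 + x.2 * y.1)

/-- Conjugation on `K`: quaternion conjugation on both components (`ε† = ε`). -/
def Kconj (x : Quaternion ℝ × Quaternion ℝ) : Quaternion ℝ × Quaternion ℝ :=
  (star x.1, star x.2)

theorem mul_mul_star_of_commute {R : Type*} [Semiring R] [StarRing R] (a b : R)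
    (hb : ∀ c : R, Commute (b * star b) c) :
    a * b * star (a * b) = a * star a * (b * star b) := by
  calc a * b * star (a * b) = a * (b * star b) * star a := by
        rw [star_mul, mul_assoc, mul_assoc, mul_assoc]
    _ = b * star b * (a * star a) := by rw [(hb a).symm.eq, mul_assoc]
    _ = a * star a * (b * star b) := (hb _).eq

theorem Quaternion.commute_self_mul_star {R : Type*} [CommRing R] (a b : Quaternion R) :
    Commute (a * star a) b := by
  simpa only [Quaternion.self_mul_star] using Quaternion.coe_commute _ b

def Ksplit (x : Quaternion ℝ × Quaternion ℝ) : Quaternion ℝ × Quaternion ℝ :=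
  (x.1 + x.2, x.1 - x.2)

theorem Ksplit_injective : Function.Injective Ksplit := by
  rintro ⟨a, b⟩ ⟨c, d⟩ h
  obtain ⟨hs, hd⟩ := Prod.mk.inj h
  have cancel_two : ∀ u v : Quaternion ℝ, (2 : ℝ) • u = (2 : ℝ) • v → u = v :=
    fun _ _ => (smul_right_injective _ two_ne_zero ·)
  exact Prod.ext (cancel_two _ _ (by linear_combination (norm := module) hs + hd))
    (cancel_two _ _ (by linear_combination (norm := module) hs - hd))

theorem Ksplit_Kmul (x y : Quaternion ℝ × Quaternion ℝ) :
    Ksplit (Kmul x y) = Ksplit x * Ksplit y := by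
  ext <;> simp only [Ksplit, Kmul, Prod.fst_mul, Prod.snd_mul] <;> noncomm_ring

theorem Ksplit_Kconj (x : Quaternion ℝ × Quaternion ℝ) : Ksplit (Kconj x) = star (Ksplit x) := by
  ext <;> simp only [Ksplit, Kconj, Prod.fst_star, Prod.snd_star, star_add, star_sub]

/-- Composition law for K: (Q₁Q₂)(Q₁Q₂)† = (Q₁Q₁†)(Q₂Q₂†), with no orthogonality
assumption. -/
theorem K_composition_law (Q1 Q2 : Quaternion ℝ × Quaternion ℝ) :
    Kmul (Kmul Q1 Q2) (Kconj (Kmul Q1 Q2)) =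
      Kmul (Kmul Q1 (Kconj Q1)) (Kmul Q2 (Kconj Q2)) := by
  apply Ksplit_injective
  simp only [Ksplit_Kmul, Ksplit_Kconj]
  exact mul_mul_star_of_commute _ _ fun _ =>
    Commute.prod (Quaternion.commute_self_mul_star _ _) (Quaternion.commute_self_mul_star _ _)
end
end

section
/- (Norm multiplicativity) Define ‖Q‖ = √(|q_r|² + |q_d|²) for Q = q_r + q_d ε. If Q₁ and Q₂ both satisfy the orthogonality condition q_r q_d† + q_d q_r† = 0, then ‖Q₁ Q₂‖ = ‖Q₁‖ ‖Q₂‖. -/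
noncomputable section

/-- The norm of an element of K: the Euclidean norm of (q_r, q_d) ∈ ℝ⁸. -/
def Knorm (x : Quaternion ℝ × Quaternion ℝ) : ℝ :=
  Real.sqrt (Quaternion.normSq x.1 + Quaternion.normSq x.2)

/-! Expanding `|ac + bd|² + |ad + bc|²`, the squared terms give `(|a|² + |b|²)(|c|² + |d|²)`
and the two cross terms combine to `2 Re (a (c d† + d c†) b†)`, which the orthogonality
condition on `(c, d)` kills. -/

namespace Quaternion

theorem normSq_mul_add_mul_add_normSq_mul_add_mul {R : Type*} [CommRing R] (a b c d : ℍ[R])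
    (h : c * star d + d * star c = 0) :
    normSq (a * c + b * d) + normSq (a * d + b * c) =
      (normSq a + normSq b) * (normSq c + normSq d) := by
  have cross : (a * c * star (b * d)).re + (a * d * star (b * c)).re = 0 := by
    rw [← re_add, star_mul, star_mul,
      show a * c * (star d * star b) + a * d * (star c * star b) =
        a * (c * star d + d * star c) * star b by noncomm_ring, h, mul_zero, zero_mul, re_zero]
  simp only [normSq_add, map_mul]
  linear_combination 2 * cross

end Quaternion

theorem K_norm_mul_general (Q1 Q2 : Quaternion ℝ × Quaternion ℝ)
    (h2 : Q2.1 * star Q2.2 + Q2.2 * star Q2.1 = 0) :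
    Knorm (Kmul Q1 Q2) = Knorm Q1 * Knorm Q2 := by
  have hQ1 : 0 ≤ Quaternion.normSq Q1.1 + Quaternion.normSq Q1.2 :=
    add_nonneg Quaternion.normSq_nonneg Quaternion.normSq_nonneg
  rw [Knorm, Kmul, Quaternion.normSq_mul_add_mul_add_normSq_mul_add_mul _ _ _ _ h2,
    Real.sqrt_mul hQ1, Knorm, Knorm]

/-- Norm multiplicativity: if Q₁ and Q₂ satisfy the orthogonality condition, then
‖Q₁Q₂‖ = ‖Q₁‖‖Q₂‖. -/
theorem K_norm_mul (Q1 Q2 : Quaternion ℝ × Quaternion ℝ)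
    (h1 : Q1.1 * star Q1.2 + Q1.2 * star Q1.1 = 0)
    (h2 : Q2.1 * star Q2.2 + Q2.2 * star Q2.1 = 0) :
    Knorm (Kmul Q1 Q2) = Knorm Q1 * Knorm Q2 :=
  K_norm_mul_general Q1 Q2 h2
end
end

section
/- The set S⁷ = { q_r + q_d ε ∈ K : |q_r|² + |q_d|² = 1 and q_r q_d† + q_d q_r† = 0 } is closed under the multiplication of K. -/
noncomputable section

/-- The 7-sphere in K: unit-norm elements satisfying the orthogonality condition. -/
def S7 : Set (Quaternion ℝ × Quaternion ℝ) :=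
  {x | Quaternion.normSq x.1 + Quaternion.normSq x.2 = 1 ∧
    x.1 * star x.2 + x.2 * star x.1 = 0}

lemma key1 (a b c d : Quaternion ℝ)
    (hc : c * star c + d * star d = 1)
    (hcd : c * star d + d * star c = 0) :
    (a*c+b*d) * star (a*c+b*d) + (a*d+b*c) * star (a*d+b*c)
      = a * star a + b * star b := by
  have e : (a*c+b*d) * star (a*c+b*d) + (a*d+b*c) * star (a*d+b*c)
      = a*(c*star c + d*star d)*star a + a*(c*star d + d*star c)*star b
        + b*(c*star d + d*star c)*star a + b*(c*star c + d*star d)*star b := by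
    simp only [star_add, star_mul]
    noncomm_ring
  rw [e, hc, hcd]
  noncomm_ring

lemma key2 (a b c d : Quaternion ℝ)
    (hc : c * star c + d * star d = 1)
    (hcd : c * star d + d * star c = 0) :
    (a*c+b*d) * star (a*d+b*c) + (a*d+b*c) * star (a*c+b*d)
      = a * star b + b * star a := by
  have e : (a*c+b*d) * star (a*d+b*c) + (a*d+b*c) * star (a*c+b*d)
      = a*(c*star d + d*star c)*star a + a*(c*star c + d*star d)*star b
        + b*(c*star c + d*star d)*star a + b*(c*star d + d*star c)*star b := by
    simp only [star_add, star_mul]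
    noncomm_ring
  rw [e, hc, hcd]
  noncomm_ring

/-- S⁷ ⊂ K is closed under the multiplication of K. -/
theorem S7_mul_closed (Q1 Q2 : Quaternion ℝ × Quaternion ℝ)
    (h1 : Q1 ∈ S7) (h2 : Q2 ∈ S7) : Kmul Q1 Q2 ∈ S7 := by
  obtain ⟨a, b⟩ := Q1
  obtain ⟨c, d⟩ := Q2
  obtain ⟨hn1, ho1⟩ := h1
  obtain ⟨hn2, ho2⟩ := h2
  simp only [S7, Set.mem_setOf_eq] at *
  have hc : c * star c + d * star d = 1 := by
    rw [Quaternion.self_mul_star, Quaternion.self_mul_star]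
    exact_mod_cast congrArg (Quaternion.coe : ℝ → Quaternion ℝ) hn2
  constructor
  · have := key1 a b c d hc ho2
    rw [Quaternion.self_mul_star, Quaternion.self_mul_star,
      Quaternion.self_mul_star, Quaternion.self_mul_star] at this
    have h' : Quaternion.normSq (a*c+b*d) + Quaternion.normSq (a*d+b*c)
        = Quaternion.normSq a + Quaternion.normSq b := by
      exact Quaternion.coe_injective (by exact_mod_cast this)
    simpa [Kmul, h'] using hn1
  · have := key2 a b c d hc ho2
    simpa [Kmul, ho1] using this
end
end

section
/- If Q₁ and Q₂ satisfy the orthogonality condition and Q₁ Q₂ = 0 in K, then Q₁ = 0 or Q₂ = 0 (no zero divisors among orthogonality-constrained elements). -/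
noncomputable section

/-- No zero divisors among orthogonality-constrained elements of K. -/
theorem K_no_zero_divisors (Q1 Q2 : Quaternion ℝ × Quaternion ℝ)
    (h1 : Q1.1 * star Q1.2 + Q1.2 * star Q1.1 = 0)
    (h2 : Q2.1 * star Q2.2 + Q2.2 * star Q2.1 = 0)
    (h : Kmul Q1 Q2 = (0, 0)) :
    Q1 = (0, 0) ∨ Q2 = (0, 0) := by
  obtain ⟨a, b⟩ := Q1
  obtain ⟨c, d⟩ := Q2
  simp only [Kmul, Prod.mk.injEq] at h h1 h2 ⊢
  obtain ⟨hr, hd⟩ := h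
  have key : (a*c+b*d) * star (a*c+b*d) + (a*d+b*c) * star (a*d+b*c)
      = a * (c * star c + d * star d) * star a + b * (c * star c + d * star d) * star b
        + a * (c * star d + d * star c) * star b + b * (c * star d + d * star c) * star a := by
    simp only [star_add, star_mul, star_star]
    noncomm_ring
  rw [hr, hd, h2] at key
  simp only [mul_zero, zero_mul, add_zero, zero_add] at key
  have hcc : c * star c = ((Quaternion.normSq c : ℝ) : Quaternion ℝ) := by
    rw [Quaternion.self_mul_star]
  have hdd : d * star d = ((Quaternion.normSq d : ℝ) : Quaternion ℝ) := by
    rw [Quaternion.self_mul_star]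
  rw [hcc, hdd, ← Quaternion.coe_add] at key
  set r : ℝ := Quaternion.normSq c + Quaternion.normSq d with hrdef
  have hcomm : ∀ x : Quaternion ℝ, x * (r : Quaternion ℝ) * star x
      = ((r * Quaternion.normSq x : ℝ) : Quaternion ℝ) := by
    intro x
    rw [Quaternion.mul_coe_eq_smul, smul_mul_assoc, Quaternion.self_mul_star,
      Quaternion.coe_mul, Quaternion.coe_mul_eq_smul]
  rw [hcomm, hcomm, ← Quaternion.coe_add, ← mul_add] at key
  have key' : r * (Quaternion.normSq a + Quaternion.normSq b) = 0 := by
    have hk := key.symm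
    rw [← Quaternion.coe_zero] at hk
    exact Quaternion.coe_injective hk
  rcases mul_eq_zero.mp key' with hc | ha
  · right
    have hc' : Quaternion.normSq c + Quaternion.normSq d = 0 := hrdef ▸ hc
    have t1 : 0 ≤ Quaternion.normSq c := Quaternion.normSq_nonneg
    have t2 : 0 ≤ Quaternion.normSq d := Quaternion.normSq_nonneg
    refine ⟨Quaternion.normSq_eq_zero.mp ?_, Quaternion.normSq_eq_zero.mp ?_⟩ <;> linarith
  · left
    have t1 : 0 ≤ Quaternion.normSq a := Quaternion.normSq_nonneg
    have t2 : 0 ≤ Quaternion.normSq b := Quaternion.normSq_nonneg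
    refine ⟨Quaternion.normSq_eq_zero.mp ?_, Quaternion.normSq_eq_zero.mp ?_⟩ <;> linarith
end
end
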